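/- Let ρ be a primitive cube root of unity in ℂ and let σ : ℙ³(ℂ) → ℙ³(ℂ) be the automorphism of complex projective 3-space induced by the invertible linear map (x, y, z, t) ↦ (y, x, z, ρt) on ℂ⁴. Consider the cubic surface S = { (x:y:z:t) ∈ ℙ³(ℂ) : x³ + y³ + z³ + t³ = 0 }. Then the set of points p ∈ S with σ(p) = p is finite and has exactly 4 elements. -/
import Mathlib

open Projectivization

private lemma rho_sum {ρ : ℂ} (hρ : ρ ^ 3 = 1) (hρ1 : ρ ≠ 1) : ρ ^ 2 + ρ + 1 = 0 := by
  have h0 : (ρ - 1) * (ρ ^ 2 + ρ + 1) = 0 := by linear_combination hρ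
  rcases mul_eq_zero.1 h0 with h1 | h1
  · exact absurd (by linear_combination h1) hρ1
  · exact h1

private lemma cube_eq_cube {ρ c x : ℂ} (hρ : ρ ^ 3 = 1) (hρ1 : ρ ≠ 1) (h : x ^ 3 = c ^ 3) :
    x = c ∨ x = ρ * c ∨ x = ρ ^ 2 * c := by
  have hsum := rho_sum hρ hρ1
  have key : (x - c) * ((x - ρ * c) * (x - ρ ^ 2 * c)) = 0 := by
    linear_combination h + (c ^ 2 * x - c * x ^ 2) * hsum + (c ^ 2 * x - c ^ 3) * hρ
  rcases mul_eq_zero.1 key with h1 | h1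
  · exact Or.inl (sub_eq_zero.1 h1)
  · rcases mul_eq_zero.1 h1 with h2 | h2
    · exact Or.inr (Or.inl (sub_eq_zero.1 h2))
    · exact Or.inr (Or.inr (sub_eq_zero.1 h2))

theorem fixed_points_on_fermat_cubic_surface
    (ρ : ℂ) (hρ : ρ ^ 3 = 1) (hρ1 : ρ ≠ 1)
    (f : (Fin 4 → ℂ) ≃ₗ[ℂ] (Fin 4 → ℂ))
    (hf : ∀ v : Fin 4 → ℂ, f v = ![v 1, v 0, v 2, ρ * v 3]) :
    {p : Projectivization ℂ (Fin 4 → ℂ) |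
        (p.rep 0) ^ 3 + (p.rep 1) ^ 3 + (p.rep 2) ^ 3 + (p.rep 3) ^ 3 = 0 ∧
        Projectivization.map f.toLinearMap f.injective p = p}.Finite ∧
    {p : Projectivization ℂ (Fin 4 → ℂ) |
        (p.rep 0) ^ 3 + (p.rep 1) ^ 3 + (p.rep 2) ^ 3 + (p.rep 3) ^ 3 = 0 ∧
        Projectivization.map f.toLinearMap f.injective p = p}.ncard = 4 := by
  have hρ0 : ρ ≠ 0 := by rintro rfl; simp at hρ
  have hρn1 : ρ ≠ -1 := by rintro rfl; norm_num at hρ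
  have hρ2 : ρ ^ 2 ≠ 1 := by
    intro h
    exact hρ1 (by linear_combination hρ - ρ * h)
  obtain ⟨c, hc3⟩ : ∃ c : ℂ, c ^ 3 = -2 :=
    IsAlgClosed.exists_pow_nat_eq (-2 : ℂ) (by norm_num)
  have hc0 : c ≠ 0 := by rintro rfl; norm_num at hc3
  have hw1 : (![1, -1, 0, 0] : Fin 4 → ℂ) ≠ 0 := fun h => by simpa using congrFun h 0
  have hwb : ∀ b : ℂ, (![1, 1, b, 0] : Fin 4 → ℂ) ≠ 0 := fun b h => by simpa using congrFun h 0
  set P1 : Projectivization ℂ (Fin 4 → ℂ) := Projectivization.mk ℂ ![1, -1, 0, 0] hw1 with hP1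
  set Q : ℂ → Projectivization ℂ (Fin 4 → ℂ) :=
    fun b => Projectivization.mk ℂ ![1, 1, b, 0] (hwb b) with hQ
  -- membership of the Q points
  have hQmem : ∀ b : ℂ, b ^ 3 = -2 →
      ((Q b).rep 0) ^ 3 + ((Q b).rep 1) ^ 3 + ((Q b).rep 2) ^ 3 + ((Q b).rep 3) ^ 3 = 0 ∧
      Projectivization.map f.toLinearMap f.injective (Q b) = Q b := by
    intro b hb3
    constructor
    · obtain ⟨a, ha⟩ := exists_smul_eq_mk_rep ℂ ![1, 1, b, 0] (hwb b)
      have h0 : (a : ℂ) * 1 = (Q b).rep 0 := congrFun ha 0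
      have h1 : (a : ℂ) * 1 = (Q b).rep 1 := congrFun ha 1
      have h2 : (a : ℂ) * b = (Q b).rep 2 := congrFun ha 2
      have h3 : (a : ℂ) * 0 = (Q b).rep 3 := congrFun ha 3
      rw [← h0, ← h1, ← h2, ← h3]
      linear_combination ((a : ℂ)) ^ 3 * hb3
    · simp only [hQ]
      rw [Projectivization.map_mk, Projectivization.mk_eq_mk_iff]
      refine ⟨1, ?_⟩
      simp only [LinearEquiv.coe_coe, hf]
      funext i
      fin_cases i <;> simp
  have hP1mem : (P1.rep 0) ^ 3 + (P1.rep 1) ^ 3 + (P1.rep 2) ^ 3 + (P1.rep 3) ^ 3 = 0 ∧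
      Projectivization.map f.toLinearMap f.injective P1 = P1 := by
    constructor
    · obtain ⟨a, ha⟩ := exists_smul_eq_mk_rep ℂ ![1, -1, 0, 0] hw1
      have h0 : (a : ℂ) * 1 = P1.rep 0 := congrFun ha 0
      have h1 : (a : ℂ) * (-1) = P1.rep 1 := congrFun ha 1
      have h2 : (a : ℂ) * 0 = P1.rep 2 := congrFun ha 2
      have h3 : (a : ℂ) * 0 = P1.rep 3 := congrFun ha 3
      rw [← h0, ← h1, ← h2, ← h3]
      ring
    · simp only [hP1]
      rw [Projectivization.map_mk, Projectivization.mk_eq_mk_iff]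
      refine ⟨-1, ?_⟩
      simp only [LinearEquiv.coe_coe, hf]
      funext i
      fin_cases i <;> simp
  -- the set equality
  have hT : {p : Projectivization ℂ (Fin 4 → ℂ) |
        (p.rep 0) ^ 3 + (p.rep 1) ^ 3 + (p.rep 2) ^ 3 + (p.rep 3) ^ 3 = 0 ∧
        Projectivization.map f.toLinearMap f.injective p = p} =
      {P1, Q c, Q (ρ * c), Q (ρ ^ 2 * c)} := by
    ext p
    simp only [Set.mem_setOf_eq, Set.mem_insert_iff, Set.mem_singleton_iff]
    constructor
    · rintro ⟨hcub, hfix⟩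
      have hv : p.rep ≠ 0 := p.rep_nonzero
      have hp : Projectivization.mk ℂ p.rep hv = p := p.mk_rep
      rw [← hp, Projectivization.map_mk, Projectivization.mk_eq_mk_iff] at hfix
      obtain ⟨a, ha⟩ := hfix
      simp only [LinearEquiv.coe_coe, hf] at ha
      have e0 : (a : ℂ) * p.rep 0 = p.rep 1 := congrFun ha 0
      have e1 : (a : ℂ) * p.rep 1 = p.rep 0 := congrFun ha 1
      have e2 : (a : ℂ) * p.rep 2 = p.rep 2 := congrFun ha 2
      have e3 : (a : ℂ) * p.rep 3 = ρ * p.rep 3 := congrFun ha 3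
      by_cases h2 : p.rep 2 = 0
      · by_cases h0 : p.rep 0 = 0
        · exfalso
          have h1' : p.rep 1 = 0 := by rw [← e0, h0, mul_zero]
          have h3' : p.rep 3 = 0 := by
            have h33 : (p.rep 3) ^ 3 = 0 := by
              rw [h0, h1', h2] at hcub
              linear_combination hcub
            exact pow_eq_zero_iff (n := 3) (by norm_num) |>.1 h33
          apply hv
          funext i
          fin_cases i <;> simp [h0, h1', h2, h3']
        · have ha2 : (a : ℂ) ^ 2 = 1 := by
            have hh : ((a : ℂ) ^ 2 - 1) * p.rep 0 = 0 := by
              linear_combination (a : ℂ) * e0 + e1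
            rcases mul_eq_zero.1 hh with h | h
            · linear_combination h
            · exact absurd h h0
          have haa : (a : ℂ) = 1 ∨ (a : ℂ) = -1 := by
            have hh : ((a : ℂ) - 1) * ((a : ℂ) + 1) = 0 := by linear_combination ha2
            rcases mul_eq_zero.1 hh with h | h
            · exact Or.inl (by linear_combination h)
            · exact Or.inr (by linear_combination h)
          rcases haa with haa | haa
          · exfalso
            have h1' : p.rep 1 = p.rep 0 := by rw [← e0, haa, one_mul]
            have h3' : p.rep 3 = 0 := by
              have hh : (ρ - 1) * p.rep 3 = 0 := by
                rw [haa] at e3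
                linear_combination -e3
              rcases mul_eq_zero.1 hh with h | h
              · exact absurd (by linear_combination h) hρ1
              · exact h
            rw [h1', h2, h3'] at hcub
            have h03 : (p.rep 0) ^ 3 = 0 := by linear_combination (1 / 2 : ℂ) * hcub
            exact h0 (pow_eq_zero_iff (n := 3) (by norm_num) |>.1 h03)
          · left
            have h1' : p.rep 1 = -p.rep 0 := by rw [← e0, haa]; ring
            have h3' : p.rep 3 = 0 := by
              have hh : (ρ + 1) * p.rep 3 = 0 := by
                rw [haa] at e3
                linear_combination -e3
              rcases mul_eq_zero.1 hh with h | h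
              · exact absurd (by linear_combination h) hρn1
              · exact h
            have goal1 : Projectivization.mk ℂ p.rep hv = Projectivization.mk ℂ ![1, -1, 0, 0] hw1 := ?_
            · rw [← hp]; exact goal1
            rw [Projectivization.mk_eq_mk_iff']
            refine ⟨p.rep 0, ?_⟩
            funext i
            fin_cases i
            · show p.rep 0 * 1 = p.rep 0; ring
            · show p.rep 0 * (-1) = p.rep 1; rw [h1']; ring
            · show p.rep 0 * 0 = p.rep 2; rw [h2]; ring
            · show p.rep 0 * 0 = p.rep 3; rw [h3']; ring
      · have ha1 : (a : ℂ) = 1 :=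
          mul_right_cancel₀ h2 (e2.trans (one_mul (p.rep 2)).symm)
        have h1' : p.rep 1 = p.rep 0 := by rw [← e0, ha1, one_mul]
        have h3' : p.rep 3 = 0 := by
          have hh : (ρ - 1) * p.rep 3 = 0 := by
            rw [ha1] at e3
            linear_combination -e3
          rcases mul_eq_zero.1 hh with h | h
          · exact absurd (by linear_combination h) hρ1
          · exact h
        have h0 : p.rep 0 ≠ 0 := by
          intro h0
          apply h2
          have h23 : (p.rep 2) ^ 3 = 0 := by
            rw [h1', h0, h3'] at hcub
            linear_combination hcub
          exact pow_eq_zero_iff (n := 3) (by norm_num) |>.1 h23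
        have hx3 : (p.rep 2 / p.rep 0) ^ 3 = c ^ 3 := by
          rw [div_pow, hc3, div_eq_iff (pow_ne_zero 3 h0)]
          rw [h1', h3'] at hcub
          linear_combination hcub
        have key : ∀ b : ℂ, p.rep 2 / p.rep 0 = b → p = Q b := by
          intro b hb
          have goal1 : Projectivization.mk ℂ p.rep hv = Projectivization.mk ℂ ![1, 1, b, 0] (hwb b) := ?_
          · rw [← hp]; exact goal1
          rw [Projectivization.mk_eq_mk_iff']
          refine ⟨p.rep 0, ?_⟩
          funext i
          fin_cases i
          · show p.rep 0 * 1 = p.rep 0; ring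
          · show p.rep 0 * 1 = p.rep 1; rw [h1']; ring
          · show p.rep 0 * b = p.rep 2; rw [← hb]; field_simp
          · show p.rep 0 * 0 = p.rep 3; rw [h3']; ring
        rcases cube_eq_cube hρ hρ1 hx3 with h | h | h
        · exact Or.inr (Or.inl (key c h))
        · exact Or.inr (Or.inr (Or.inl (key (ρ * c) h)))
        · exact Or.inr (Or.inr (Or.inr (key (ρ ^ 2 * c) h)))
    · rintro (rfl | rfl | rfl | rfl)
      · exact hP1mem
      · exact hQmem c hc3
      · exact hQmem (ρ * c) (by rw [mul_pow, hρ, one_mul, hc3])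
      · refine hQmem (ρ ^ 2 * c) ?_
        have h6 : (ρ ^ 2) ^ 3 = (ρ ^ 3) ^ 2 := by ring
        rw [mul_pow, h6, hρ, one_pow, one_mul, hc3]
  -- distinctness
  have hP1Q : ∀ b : ℂ, P1 ≠ Q b := by
    intro b h
    rw [hP1, hQ, Projectivization.mk_eq_mk_iff] at h
    obtain ⟨a, ha⟩ := h
    have h0 : (a : ℂ) * 1 = 1 := congrFun ha 0
    have h1 : (a : ℂ) * 1 = -1 := congrFun ha 1
    rw [h0] at h1
    norm_num at h1
  have hQQ : ∀ b b' : ℂ, b ≠ b' → Q b ≠ Q b' := by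
    intro b b' hbb h
    rw [hQ, Projectivization.mk_eq_mk_iff] at h
    obtain ⟨a, ha⟩ := h
    have h0 : (a : ℂ) * 1 = 1 := congrFun ha 0
    have h2 : (a : ℂ) * b' = b := congrFun ha 2
    rw [mul_one] at h0
    rw [h0, one_mul] at h2
    exact hbb h2.symm
  have d1 : c ≠ ρ * c := by
    intro h
    have hh : (ρ - 1) * c = 0 := by linear_combination -h
    rcases mul_eq_zero.1 hh with h' | h'
    · exact hρ1 (by linear_combination h')
    · exact hc0 h'
  have d2 : c ≠ ρ ^ 2 * c := by
    intro h
    have hh : (ρ ^ 2 - 1) * c = 0 := by linear_combination -h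
    rcases mul_eq_zero.1 hh with h' | h'
    · exact hρ2 (by linear_combination h')
    · exact hc0 h'
  have d3 : ρ * c ≠ ρ ^ 2 * c := by
    intro h
    have hh : ρ * (ρ - 1) * c = 0 := by linear_combination -h
    rcases mul_eq_zero.1 hh with h' | h'
    · rcases mul_eq_zero.1 h' with h'' | h''
      · exact hρ0 h''
      · exact hρ1 (by linear_combination h'')
    · exact hc0 h'
  rw [hT]
  refine ⟨(((Set.finite_singleton _).insert _).insert _).insert _, ?_⟩
  rw [Set.ncard_insert_of_notMem (by simp [hP1Q]),
    Set.ncard_insert_of_notMem (by simp [hQQ _ _ d1, hQQ _ _ d2]),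
    Set.ncard_pair (hQQ _ _ d3)]
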